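/- arXiv:1802.05824 — 3 statements merged into one kernel-verified Lean document; each statement's English description precedes it below -/
import Mathlib

section
/- If (M, ω) is a weighted brick complex having at least one interior facet of positive weight, then M contains a proper surface that is either a stable minimal surface or an unstable minimal surface. -/
/-!
Sweep the complex by adding one brick at a time, and take a sweepout whose highest level weight
is as small as possible and, among those, is attained at as few levels as possible. The level
surface `S` at a highest level `t` is proper, being a symmetric difference of brick boundaries,
and non-empty, since every sweepout cuts the interior facet of positive weight at some level.
If `S` is not stable, split the bricks into those below and above level `t`. Exchanging a
shortening move `A` below with a shortening move `B` above changes the weight of level `t` by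
`σ(A;S) + σ(B;S) + 2ω(∂A ⊓ ∂B)` without raising any other level to the maximum, so minimality
forces `2ω(∂A ⊓ ∂B) ≥ |σ(A;S)| + |σ(B;S)|`. The bricks entering at levels `t` and `t + 1` are
shortening moves, and these inequalities make them balance every strict shortening move on the
other side, which is the unstable case.
-/

open Finset

/-- The total weight of a set of facets. -/
def wt {Facet : Type} [DecidableEq Facet] (ω : Facet → ℝ) (S : Finset Facet) : ℝ :=
  ∑ f ∈ S, ω f

/-- The strength σ(A;S) of a brick with set of interior facets `intA`
relative to a surface `S`:  ω(∂'_S A) − ω(∂_S A). -/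
def strength {Facet : Type} [DecidableEq Facet] (ω : Facet → ℝ) (intA S : Finset Facet) : ℝ :=
  wt ω (intA \ S) - wt ω (intA ∩ S)

/-- A surface (set of facets) is proper if none of its facets lies in ∂M and every
(n−2)-face not in ∂M is contained in an even number of its facets. -/
def ProperSurf {Facet Face : Type} [DecidableEq Facet] [DecidableEq Face]
    (bdF : Finset Facet) (facesOf : Facet → Finset Face) (bdE : Finset Face)
    (S : Finset Facet) : Prop :=
  (∀ f ∈ S, f ∉ bdF) ∧
  ∀ e : Face, e ∉ bdE → Even ((S.filter (fun f => e ∈ facesOf f)).card)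

/-- The interior facets ∂_I A of a brick `A`: facets incident to exactly two bricks,
one of which is `A`. -/
def intFacets {Brick Facet : Type} [DecidableEq Brick] [Fintype Facet] [DecidableEq Facet]
    (bricksOf : Facet → Finset Brick) (A : Brick) : Finset Facet :=
  univ.filter (fun f => A ∈ bricksOf f ∧ (bricksOf f).card = 2)

/-- The facets shared by two bricks `A` and `B` (∂A ⊓ ∂B). -/
def commonFacets {Brick Facet : Type} [DecidableEq Brick] [Fintype Facet] [DecidableEq Facet]
    (bricksOf : Facet → Finset Brick) (A B : Brick) : Finset Facet :=
  univ.filter (fun f => A ∈ bricksOf f ∧ B ∈ bricksOf f)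

/-- `A` is a shortening move for `S` (given interior facets `intA` of `A`):
it meets `S` and σ(A;S) ≤ 0. -/
def ShortMove {Facet : Type} [DecidableEq Facet] (ω : Facet → ℝ) (intA S : Finset Facet) : Prop :=
  (intA ∩ S).Nonempty ∧ strength ω intA S ≤ 0

/-- `A` is a strict shortening move for `S`: it meets `S` and σ(A;S) < 0. -/
def StrictShort {Facet : Type} [DecidableEq Facet] (ω : Facet → ℝ) (intA S : Finset Facet) : Prop :=
  (intA ∩ S).Nonempty ∧ strength ω intA S < 0

/-- The sublevel set M_j of an ordering: the bricks at heights 1,…,j. -/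
def sublevel {Brick : Type} [Fintype Brick] [DecidableEq Brick] {N : ℕ}
    (O : Fin N ≃ Brick) (j : ℕ) : Finset Brick :=
  univ.filter (fun T => ((O.symm T : Fin N) : ℕ) + 1 ≤ j)

/-- The level surface S_j at height j: facets shared between a brick of M_j and a
brick not in M_j. -/
def levelSurf {Brick Facet : Type} [Fintype Brick] [DecidableEq Brick]
    [Fintype Facet] [DecidableEq Facet]
    (bricksOf : Facet → Finset Brick) {N : ℕ} (O : Fin N ≃ Brick) (j : ℕ) : Finset Facet :=
  univ.filter (fun f => (∃ T ∈ bricksOf f, T ∈ sublevel O j) ∧ ∃ T ∈ bricksOf f, T ∉ sublevel O j)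

/-- Λ(j): the weight of the level surface at height j. -/
def Lam {Brick Facet : Type} [Fintype Brick] [DecidableEq Brick]
    [Fintype Facet] [DecidableEq Facet] (ω : Facet → ℝ)
    (bricksOf : Facet → Finset Brick) {N : ℕ} (O : Fin N ≃ Brick) (j : ℕ) : ℝ :=
  wt ω (levelSurf bricksOf O j)

/-- `t` is a (local) maximum of the ordering with level-weight function Λ. -/
def IsMaxAt (N : ℕ) (Λ : ℕ → ℝ) (t : ℕ) : Prop :=
  ∃ tm tp : ℕ, tm < t ∧ t < tp ∧ tp ≤ N ∧
    Λ tm < Λ (tm + 1) ∧ Λ tp < Λ (tp - 1) ∧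
    ∀ k, tm < k → k < tp → Λ k = Λ t

open Classical in
/-- The width Ω of an ordering: the values of Λ at its maxima, arranged in
non-increasing order. -/
noncomputable def widthList (N : ℕ) (Λ : ℕ → ℝ) : List ℝ :=
  ((((Finset.range (N + 1)).filter (fun t => IsMaxAt N Λ t)).val.map Λ).sort (· ≤ ·)).reverse

/-- Strict lexicographic comparison of widths. -/
def WidthLT (l₁ l₂ : List ℝ) : Prop := List.Lex (· < ·) l₁ l₂

/-- Lexicographic comparison of widths. -/
def WidthLE (l₁ l₂ : List ℝ) : Prop := WidthLT l₁ l₂ ∨ l₁ = l₂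

/-- A single legal swap: O' is obtained from O by interchanging the bricks at heights
i and i+1, without increasing width. -/
def ThinStep {Brick Facet : Type} [Fintype Brick] [DecidableEq Brick]
    [Fintype Facet] [DecidableEq Facet]
    (ω : Facet → ℝ) (bricksOf : Facet → Finset Brick) {N : ℕ}
    (O O' : Fin N ≃ Brick) : Prop :=
  (∃ (i : Fin N) (hi : (i : ℕ) + 1 < N),
    O' = (Equiv.swap i ⟨(i : ℕ) + 1, hi⟩).trans O) ∧
  WidthLE (widthList N (Lam ω bricksOf O')) (widthList N (Lam ω bricksOf O))

/-- `O` thins to `O'`: a sequence of width-non-increasing adjacent swaps leads from O to O'. -/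
def ThinsTo {Brick Facet : Type} [Fintype Brick] [DecidableEq Brick]
    [Fintype Facet] [DecidableEq Facet]
    (ω : Facet → ℝ) (bricksOf : Facet → Finset Brick) {N : ℕ}
    (O O' : Fin N ≃ Brick) : Prop :=
  Relation.ReflTransGen (ThinStep ω bricksOf) O O'

/-- `O` is locally thin: it does not thin to any ordering of strictly smaller width. -/
def LocallyThin {Brick Facet : Type} [Fintype Brick] [DecidableEq Brick]
    [Fintype Facet] [DecidableEq Facet]
    (ω : Facet → ℝ) (bricksOf : Facet → Finset Brick) {N : ℕ}
    (O : Fin N ≃ Brick) : Prop :=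
  ∀ O' : Fin N ≃ Brick, ThinsTo ω bricksOf O O' →
    ¬ WidthLT (widthList N (Lam ω bricksOf O')) (widthList N (Lam ω bricksOf O))

/-- `t` is a (local) minimum of the ordering with level-weight function Λ. -/
def IsMinAt (N : ℕ) (Λ : ℕ → ℝ) (t : ℕ) : Prop :=
  ∃ tm tp : ℕ, tm < t ∧ t < tp ∧ tp ≤ N ∧
    Λ (tm + 1) < Λ tm ∧ Λ (tp - 1) < Λ tp ∧
    ∀ k, tm < k → k < tp → Λ k = Λ t

/-- `S` is a stable minimal surface: it admits no strict shortening move. -/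
def StableMin {Brick Facet : Type} [DecidableEq Brick] [Fintype Facet] [DecidableEq Facet]
    (ω : Facet → ℝ) (bricksOf : Facet → Finset Brick) (S : Finset Facet) : Prop :=
  ∀ A : Brick, ¬ StrictShort ω (intFacets bricksOf A) S

/-- `S` is an unstable minimal surface (Definition 2.8): the bricks partition into two
nonempty sets 𝒜, ℬ such that (1) all facets common to bricks on opposite sides lie in S;
(2) each side contains a shortening move and some side a strict one; (3) every strict
shortening move on one side is balanced by a shortening move on the other with
2ω(∂A ⊓ ∂B) ≥ |σ(A;S)| + |σ(B;S)|; and (4) this inequality holds for every pair of strict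
shortening moves on opposite sides. -/
def UnstableMin {Brick Facet : Type} [Fintype Brick] [DecidableEq Brick]
    [Fintype Facet] [DecidableEq Facet]
    (ω : Facet → ℝ) (bricksOf : Facet → Finset Brick) (S : Finset Facet) : Prop :=
  ∃ 𝒜 ℬ : Finset Brick, 𝒜.Nonempty ∧ ℬ.Nonempty ∧ 𝒜 ∩ ℬ = ∅ ∧ 𝒜 ∪ ℬ = univ ∧
    (∀ A ∈ 𝒜, ∀ B ∈ ℬ, commonFacets bricksOf A B ⊆ S) ∧
    (∃ A ∈ 𝒜, ShortMove ω (intFacets bricksOf A) S) ∧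
    (∃ B ∈ ℬ, ShortMove ω (intFacets bricksOf B) S) ∧
    ((∃ A ∈ 𝒜, StrictShort ω (intFacets bricksOf A) S) ∨
     (∃ B ∈ ℬ, StrictShort ω (intFacets bricksOf B) S)) ∧
    (∀ A ∈ 𝒜, StrictShort ω (intFacets bricksOf A) S →
      ∃ B ∈ ℬ, ShortMove ω (intFacets bricksOf B) S ∧
        2 * wt ω (commonFacets bricksOf A B) ≥
          |strength ω (intFacets bricksOf A) S| + |strength ω (intFacets bricksOf B) S|) ∧
    (∀ B ∈ ℬ, StrictShort ω (intFacets bricksOf B) S →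
      ∃ A ∈ 𝒜, ShortMove ω (intFacets bricksOf A) S ∧
        2 * wt ω (commonFacets bricksOf A B) ≥
          |strength ω (intFacets bricksOf A) S| + |strength ω (intFacets bricksOf B) S|) ∧
    (∀ A ∈ 𝒜, ∀ B ∈ ℬ, StrictShort ω (intFacets bricksOf A) S →
      StrictShort ω (intFacets bricksOf B) S →
        2 * wt ω (commonFacets bricksOf A B) ≥
          |strength ω (intFacets bricksOf A) S| + |strength ω (intFacets bricksOf B) S|)


open scoped symmDiff

section Weight

variable {Facet : Type} [DecidableEq Facet] {ω : Facet → ℝ}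

lemma wt_mono (hω : ∀ f, 0 ≤ ω f) {S T : Finset Facet} (h : S ⊆ T) : wt ω S ≤ wt ω T :=
  sum_le_sum_of_subset_of_nonneg h fun f _ _ => hω f

lemma wt_inter_add_wt_sdiff (I S : Finset Facet) : wt ω (I ∩ S) + wt ω (I \ S) = wt ω I :=
  sum_inter_add_sum_sdiff I S ω

lemma wt_sdiff {S T : Finset Facet} (h : T ⊆ S) : wt ω (S \ T) = wt ω S - wt ω T :=
  sum_sdiff_eq_sub h

lemma strength_eq (I S : Finset Facet) : strength ω I S = wt ω I - 2 * wt ω (I ∩ S) := by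
  have := wt_inter_add_wt_sdiff (ω := ω) I S
  unfold strength; linarith

lemma strength_le_strength_of_inter_subset (hω : ∀ f, 0 ≤ ω f) {I S T : Finset Facet}
    (h : I ∩ T ⊆ I ∩ S) : strength ω I S ≤ strength ω I T := by
  rw [strength_eq, strength_eq]
  linarith [wt_mono hω h]

lemma wt_symmDiff (S I : Finset Facet) : wt ω (S ∆ I) = wt ω S + strength ω I S := by
  have hS := wt_inter_add_wt_sdiff (ω := ω) S I
  have hI := wt_inter_add_wt_sdiff (ω := ω) I S
  have hunion : wt ω (S ∆ I) = wt ω (S \ I) + wt ω (I \ S) :=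
    sum_union disjoint_sdiff_sdiff
  rw [inter_comm] at hS
  unfold strength
  linarith

lemma strength_symmDiff_of_inter_subset {S I J : Finset Facet} (h : I ∩ J ⊆ S) :
    strength ω J (S ∆ I) = strength ω J S + 2 * wt ω (I ∩ J) := by
  have hset : J ∩ (S ∆ I) = (J ∩ S) \ (I ∩ J) := by
    ext f
    simp only [mem_inter, mem_symmDiff, mem_sdiff]
    have := @h f
    simp only [mem_inter] at this
    tauto
  have hsub : I ∩ J ⊆ J ∩ S := fun f hf => mem_inter.2 ⟨(mem_inter.1 hf).2, h hf⟩
  rw [strength_eq, strength_eq, hset, wt_sdiff hsub]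
  ring

end Weight

section ProperSurface

variable {Facet Face : Type} [DecidableEq Facet] [DecidableEq Face]
  {bdF : Finset Facet} {facesOf : Facet → Finset Face} {bdE : Finset Face}

lemma even_card_symmDiff {α : Type} [DecidableEq α] {s t : Finset α}
    (hs : Even #s) (ht : Even #t) : Even #(s ∆ t) := by
  have hunion := card_union_add_card_inter s t
  have hsymm : #(s ∆ t) + #(s ∩ t) = #(s ∪ t) := by
    rw [symmDiff_eq_sup_sdiff_inf]
    exact card_sdiff_add_card_eq_card inter_subset_union
  rw [Nat.even_iff] at hs ht ⊢
  omega

lemma properSurf_empty : ProperSurf bdF facesOf bdE ∅ :=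
  ⟨by simp, by simp⟩

lemma ProperSurf.symmDiff {S T : Finset Facet} (hS : ProperSurf bdF facesOf bdE S)
    (hT : ProperSurf bdF facesOf bdE T) : ProperSurf bdF facesOf bdE (S ∆ T) := by
  refine ⟨fun f hf => ?_, fun e he => ?_⟩
  · rcases mem_symmDiff.1 hf with ⟨hfS, -⟩ | ⟨hfT, -⟩
    exacts [hS.1 f hfS, hT.1 f hfT]
  · have hfilter : (S ∆ T).filter (e ∈ facesOf ·) =
        (S.filter (e ∈ facesOf ·)) ∆ (T.filter (e ∈ facesOf ·)) := by
      ext f; simp only [mem_filter, mem_symmDiff]; tauto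
    rw [hfilter]
    exact even_card_symmDiff (hS.2 e he) (hT.2 e he)

end ProperSurface

section Cut

variable {Brick Facet : Type} [DecidableEq Brick] [Fintype Facet]

/-- `levelSurf bricksOf O j` is `cutFacets bricksOf (sublevel O j)`. -/
def cutFacets (bricksOf : Facet → Finset Brick) (X : Finset Brick) : Finset Facet :=
  univ.filter fun f => (∃ T ∈ bricksOf f, T ∈ X) ∧ ∃ T ∈ bricksOf f, T ∉ X

variable {bricksOf : Facet → Finset Brick}

@[simp]
lemma mem_cutFacets {X : Finset Brick} {f : Facet} :
    f ∈ cutFacets bricksOf X ↔ (∃ T ∈ bricksOf f, T ∈ X) ∧ ∃ T ∈ bricksOf f, T ∉ X := by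
  simp [cutFacets]

@[simp]
lemma cutFacets_empty : cutFacets bricksOf ∅ = ∅ := by
  ext f; simp

lemma cutFacets_compl [Fintype Brick] (X : Finset Brick) :
    cutFacets bricksOf Xᶜ = cutFacets bricksOf X := by
  ext f; simp [and_comm]

variable [DecidableEq Facet]

@[simp]
lemma mem_intFacets {A : Brick} {f : Facet} :
    f ∈ intFacets bricksOf A ↔ A ∈ bricksOf f ∧ #(bricksOf f) = 2 := by
  simp [intFacets]

@[simp]
lemma mem_commonFacets {A B : Brick} {f : Facet} :
    f ∈ commonFacets bricksOf A B ↔ A ∈ bricksOf f ∧ B ∈ bricksOf f := by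
  simp [commonFacets]

lemma commonFacets_subset_cutFacets {X : Finset Brick} {A B : Brick} (hA : A ∈ X) (hB : B ∉ X) :
    commonFacets bricksOf A B ⊆ cutFacets bricksOf X := fun f hf => by
  rw [mem_commonFacets] at hf
  exact mem_cutFacets.2 ⟨⟨A, hf.1, hA⟩, B, hf.2, hB⟩

lemma commonFacets_eq_inter (hbricksOf : ∀ f, #(bricksOf f) ≤ 2) {A B : Brick} (hAB : A ≠ B) :
    commonFacets bricksOf A B = intFacets bricksOf A ∩ intFacets bricksOf B := by
  ext f
  simp only [mem_inter, mem_commonFacets, mem_intFacets]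
  refine ⟨fun ⟨hA, hB⟩ => ?_, fun h => ⟨h.1.1, h.2.1⟩⟩
  have : 2 ≤ #(bricksOf f) := by
    simpa [card_pair hAB] using card_le_card (insert_subset hA (singleton_subset_iff.2 hB))
  have hcard : #(bricksOf f) = 2 := le_antisymm (hbricksOf f) this
  exact ⟨⟨hA, hcard⟩, hB, hcard⟩

lemma cutFacets_insert (hbricksOf : ∀ f, #(bricksOf f) ≤ 2) {X : Finset Brick} {B : Brick}
    (hB : B ∉ X) :
    cutFacets bricksOf (insert B X) = cutFacets bricksOf X ∆ intFacets bricksOf B := by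
  ext f
  rw [mem_symmDiff, mem_cutFacets, mem_cutFacets, mem_intFacets]
  rcases (hbricksOf f).lt_or_eq with h1 | h2
  · have := card_le_one.1 (Nat.lt_succ_iff.1 h1)
    simp only [mem_insert]
    grind
  · obtain ⟨U, V, hUV, hUV'⟩ := card_eq_two.1 h2
    simp only [hUV', card_pair hUV, mem_insert, mem_singleton]
    grind

lemma cutFacets_erase (hbricksOf : ∀ f, #(bricksOf f) ≤ 2) {X : Finset Brick} {A : Brick}
    (hA : A ∈ X) :
    cutFacets bricksOf (X.erase A) = cutFacets bricksOf X ∆ intFacets bricksOf A := by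
  conv_rhs => rw [← insert_erase hA, cutFacets_insert hbricksOf (notMem_erase A X)]
  rw [symmDiff_symmDiff_cancel_right]

end Cut

section CutWeight

variable {Brick Facet : Type} [DecidableEq Brick] [Fintype Facet] [DecidableEq Facet]
  {bricksOf : Facet → Finset Brick} {ω : Facet → ℝ} {X Y : Finset Brick} {A B : Brick}

lemma wt_cutFacets_insert (hbricksOf : ∀ f, #(bricksOf f) ≤ 2) (hB : B ∉ X) :
    wt ω (cutFacets bricksOf (insert B X)) =
      wt ω (cutFacets bricksOf X) + strength ω (intFacets bricksOf B) (cutFacets bricksOf X) := by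
  rw [cutFacets_insert hbricksOf hB, wt_symmDiff]

lemma wt_cutFacets_erase (hbricksOf : ∀ f, #(bricksOf f) ≤ 2) (hA : A ∈ X) :
    wt ω (cutFacets bricksOf (X.erase A)) =
      wt ω (cutFacets bricksOf X) + strength ω (intFacets bricksOf A) (cutFacets bricksOf X) := by
  rw [cutFacets_erase hbricksOf hA, wt_symmDiff]

lemma wt_cutFacets_insert_erase (hbricksOf : ∀ f, #(bricksOf f) ≤ 2)
    (hA : A ∈ X) (hB : B ∉ X) :
    wt ω (cutFacets bricksOf (insert B (X.erase A))) =
      wt ω (cutFacets bricksOf X) + strength ω (intFacets bricksOf A) (cutFacets bricksOf X) +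
        strength ω (intFacets bricksOf B) (cutFacets bricksOf X) +
        2 * wt ω (commonFacets bricksOf A B) := by
  have hAB : A ≠ B := fun h => hB (h ▸ hA)
  have hcommon := commonFacets_eq_inter hbricksOf hAB
  rw [cutFacets_insert hbricksOf fun h => hB (mem_of_mem_erase h), cutFacets_erase hbricksOf hA,
    wt_symmDiff, wt_symmDiff, strength_symmDiff_of_inter_subset
      (hcommon ▸ commonFacets_subset_cutFacets hA hB), hcommon]
  ring

lemma inter_cutFacets_nonempty_of_wt_commonFacets_pos
    (hbricksOf : ∀ f, #(bricksOf f) ≤ 2) (hA : A ∈ X) (hB : B ∉ X)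
    (hpos : 0 < wt ω (commonFacets bricksOf A B)) :
    (intFacets bricksOf A ∩ cutFacets bricksOf X).Nonempty ∧
      (intFacets bricksOf B ∩ cutFacets bricksOf X).Nonempty := by
  obtain ⟨f, hf⟩ := nonempty_of_sum_ne_zero hpos.ne'
  have hcut := commonFacets_subset_cutFacets hA hB hf
  rw [commonFacets_eq_inter hbricksOf (ne_of_mem_of_not_mem hA hB), mem_inter] at hf
  exact ⟨⟨f, mem_inter.2 ⟨hf.1, hcut⟩⟩, f, mem_inter.2 ⟨hf.2, hcut⟩⟩

lemma strength_cutFacets_mono (hω : ∀ f, 0 ≤ ω f) (hA : A ∈ X) (hXY : X ⊆ Y) :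
    strength ω (intFacets bricksOf A) (cutFacets bricksOf X) ≤
      strength ω (intFacets bricksOf A) (cutFacets bricksOf Y) := by
  refine strength_le_strength_of_inter_subset hω fun f hf => ?_
  simp only [mem_inter, mem_intFacets, mem_cutFacets] at hf ⊢
  obtain ⟨⟨hAf, hcard⟩, -, T, hTf, hTY⟩ := hf
  exact ⟨⟨hAf, hcard⟩, ⟨A, hAf, hA⟩, T, hTf, fun hTX => hTY (hXY hTX)⟩

lemma strength_cutFacets_anti [Fintype Brick] (hω : ∀ f, 0 ≤ ω f) (hB : B ∉ Y) (hXY : X ⊆ Y) :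
    strength ω (intFacets bricksOf B) (cutFacets bricksOf Y) ≤
      strength ω (intFacets bricksOf B) (cutFacets bricksOf X) := by
  rw [← cutFacets_compl Y, ← cutFacets_compl X]
  exact strength_cutFacets_mono hω (mem_compl.2 hB) (compl_subset_compl.2 hXY)

lemma properSurf_cutFacets {Face : Type} [DecidableEq Face] {bdF : Finset Facet}
    {facesOf : Facet → Finset Face} {bdE : Finset Face}
    (hbricksOf : ∀ f, #(bricksOf f) ≤ 2)
    (hbrick : ∀ A, ProperSurf bdF facesOf bdE (intFacets bricksOf A)) (X : Finset Brick) :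
    ProperSurf bdF facesOf bdE (cutFacets bricksOf X) := by
  induction X using Finset.induction with
  | empty => rw [cutFacets_empty]; exact properSurf_empty
  | insert B X hB ih => simpa [cutFacets_insert hbricksOf hB] using ih.symmDiff (hbrick B)

end CutWeight

section Sweepout

variable {Brick : Type} [Fintype Brick] {c : ℕ → Finset Brick}

/-- The set-valued form of an ordering `O` of the bricks: `c j` plays the role of `sublevel O j`. -/
structure IsSweepout (c : ℕ → Finset Brick) : Prop where
  mono : Monotone c
  card_eq : ∀ j, #(c j) = min j (Fintype.card Brick)

lemma IsSweepout.eq_empty (hc : IsSweepout c) : c 0 = ∅ :=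
  card_eq_zero.1 (by simp [hc.card_eq 0])

lemma IsSweepout.eq_univ (hc : IsSweepout c) {j : ℕ} (hj : Fintype.card Brick ≤ j) : c j = univ :=
  (card_eq_iff_eq_univ _).1 (by simp [hc.card_eq j, hj])

lemma IsSweepout.pos_of_mem (hc : IsSweepout c) {A : Brick} {j : ℕ} (hA : A ∈ c j) : 0 < j := by
  rw [Nat.pos_iff_ne_zero]; rintro rfl; simp [hc.eq_empty] at hA

lemma IsSweepout.lt_of_notMem (hc : IsSweepout c) {B : Brick} {j : ℕ} (hB : B ∉ c j) :
    j < Fintype.card Brick := by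
  by_contra h; exact hB (hc.eq_univ (not_lt.1 h) ▸ mem_univ B)

variable [DecidableEq Brick]

lemma IsSweepout.exists_insert (hc : IsSweepout c) {j : ℕ} (hj : j < Fintype.card Brick) :
    ∃ B ∉ c j, c (j + 1) = insert B (c j) := by
  obtain ⟨B, hB, hins⟩ := exists_eq_insert_iff.2
    ⟨hc.mono j.le_succ, by rw [hc.card_eq, hc.card_eq]; omega⟩
  exact ⟨B, hB, hins.symm⟩

lemma IsSweepout.exists_separating (hc : IsSweepout c) {U V : Brick} (hUV : U ≠ V) :
    ∃ j ≤ Fintype.card Brick, ¬(U ∈ c j ↔ V ∈ c j) := by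
  by_contra! hsame
  have hex : ∃ j, U ∈ c j := ⟨_, hc.eq_univ le_rfl ▸ mem_univ U⟩
  obtain ⟨j, hUj, hmin⟩ : ∃ j, U ∈ c j ∧ ∀ k < j, U ∉ c k :=
    ⟨Nat.find hex, Nat.find_spec hex, fun _ => Nat.find_min hex⟩
  have hj0 : j ≠ 0 := by rintro rfl; simp [hc.eq_empty] at hUj
  have hjN : j ≤ Fintype.card Brick := by
    by_contra hjN
    exact hmin _ (by omega) (hc.eq_univ le_rfl ▸ mem_univ U)
  have hU : U ∉ c (j - 1) := hmin _ (by omega)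
  have hV : V ∉ c (j - 1) := fun h => hU ((hsame _ (by omega)).2 h)
  obtain ⟨B, -, hins⟩ := hc.exists_insert (j := j - 1) (by omega)
  rw [Nat.sub_add_cancel (Nat.one_le_iff_ne_zero.2 hj0)] at hins
  have hVj : V ∈ insert B (c (j - 1)) := hins ▸ (hsame j hjN).1 hUj
  rw [hins] at hUj
  simp only [mem_insert, hU, hV, or_false] at hUj hVj
  exact hUV (hUj.trans hVj.symm)

lemma IsSweepout.exists_mem_cutFacets {Facet : Type} [Fintype Facet]
    {bricksOf : Facet → Finset Brick} (hc : IsSweepout c) {f : Facet} (hf : #(bricksOf f) = 2) :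
    ∃ j ≤ Fintype.card Brick, f ∈ cutFacets bricksOf (c j) := by
  obtain ⟨U, V, hUV, hf⟩ := card_eq_two.1 hf
  obtain ⟨j, hj, hsep⟩ := hc.exists_separating hUV
  refine ⟨j, hj, ?_⟩
  simp only [mem_cutFacets, hf, mem_insert, mem_singleton, exists_eq_or_imp, exists_eq_left]
  tauto

lemma exists_isSweepout : ∃ c : ℕ → Finset Brick, IsSweepout c := by
  have hnodup : (univ : Finset Brick).toList.Nodup := nodup_toList univ
  refine ⟨fun j => ((univ : Finset Brick).toList.take j).toFinset,
    fun i j hij => Multiset.toFinset_subset.2 (List.take_subset_take_left _ hij), fun j => ?_⟩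
  rw [List.toFinset_card_of_nodup (hnodup.sublist (List.take_sublist _ _)), List.length_take,
    length_toList, card_univ]

end Sweepout

section SweepKey

variable {Brick Facet : Type} [Fintype Brick] [DecidableEq Brick] [Fintype Facet]
  [DecidableEq Facet] (ω : Facet → ℝ) (bricksOf : Facet → Finset Brick) (c : ℕ → Finset Brick)

noncomputable def maxCutWt : ℝ :=
  (range (Fintype.card Brick + 1)).sup' nonempty_range_add_one
    fun j => wt ω (cutFacets bricksOf (c j))

noncomputable def maxCutLevels : Finset ℕ :=
  (range (Fintype.card Brick + 1)).filter
    fun j => wt ω (cutFacets bricksOf (c j)) = maxCutWt ω bricksOf c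

/-- A sweepout minimising this key takes the place of the paper's locally thin ordering. -/
noncomputable def sweepKey : ℝ ×ₗ ℕ :=
  toLex (maxCutWt ω bricksOf c, #(maxCutLevels ω bricksOf c))

variable {ω bricksOf c}

lemma wt_cutFacets_le_maxCutWt {j : ℕ} (hj : j ≤ Fintype.card Brick) :
    wt ω (cutFacets bricksOf (c j)) ≤ maxCutWt ω bricksOf c :=
  le_sup' (fun j => wt ω (cutFacets bricksOf (c j))) (mem_range.2 (Nat.lt_succ_of_le hj))

lemma exists_wt_cutFacets_eq_maxCutWt :
    ∃ j ≤ Fintype.card Brick, wt ω (cutFacets bricksOf (c j)) = maxCutWt ω bricksOf c := by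
  obtain ⟨j, hj, hjmax⟩ := exists_mem_eq_sup' (nonempty_range_add_one (n := Fintype.card Brick))
    fun j => wt ω (cutFacets bricksOf (c j))
  exact ⟨j, Nat.lt_succ_iff.1 (mem_range.1 hj), hjmax.symm⟩

lemma maxCutWt_pos (hω : ∀ f, 0 ≤ ω f) (hc : IsSweepout c)
    (hpos : ∃ f, #(bricksOf f) = 2 ∧ 0 < ω f) : 0 < maxCutWt ω bricksOf c := by
  obtain ⟨f, hf, hωf⟩ := hpos
  obtain ⟨j, hj, hfj⟩ := hc.exists_mem_cutFacets hf
  calc 0 < ω f := hωf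
    _ ≤ wt ω (cutFacets bricksOf (c j)) := single_le_sum (fun g _ => hω g) hfj
    _ ≤ maxCutWt ω bricksOf c := wt_cutFacets_le_maxCutWt hj

lemma sweepKey_lt_sweepKey {c' : ℕ → Finset Brick}
    (hle : ∀ j ≤ Fintype.card Brick, wt ω (cutFacets bricksOf (c' j)) ≤ maxCutWt ω bricksOf c)
    (hfewer : (range (Fintype.card Brick + 1)).filter
        (fun j => wt ω (cutFacets bricksOf (c' j)) = maxCutWt ω bricksOf c) ⊂
      maxCutLevels ω bricksOf c) :
    sweepKey ω bricksOf c' < sweepKey ω bricksOf c := by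
  have hmax : maxCutWt ω bricksOf c' ≤ maxCutWt ω bricksOf c :=
    sup'_le _ _ fun j hj => hle j (Nat.lt_succ_iff.1 (mem_range.1 hj))
  refine Prod.Lex.toLex_lt_toLex.2 ?_
  dsimp only
  rcases hmax.lt_or_eq with hlt | heq
  · exact Or.inl hlt
  · refine Or.inr ⟨heq, card_lt_card ?_⟩
    rwa [maxCutLevels, heq]

variable (ω bricksOf)

lemma exists_isSweepout_forall_sweepKey_le :
    ∃ c : ℕ → Finset Brick, IsSweepout c ∧
      ∀ c', IsSweepout c' → sweepKey ω bricksOf c ≤ sweepKey ω bricksOf c' := by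
  have hfin : (Set.range (sweepKey ω bricksOf)).Finite := by
    refine ((((univ : Finset (Finset Facet)).image (wt ω) ×ˢ
      range (Fintype.card Brick + 2) : Finset (ℝ × ℕ)) : Set (ℝ × ℕ)).toFinite.image
        toLex).subset ?_
    rintro _ ⟨c, rfl⟩
    obtain ⟨j, -, hj⟩ := exists_wt_cutFacets_eq_maxCutWt (ω := ω) (bricksOf := bricksOf) (c := c)
    refine ⟨(maxCutWt ω bricksOf c, #(maxCutLevels ω bricksOf c)), ?_, rfl⟩
    have := card_filter_le (range (Fintype.card Brick + 1))
      fun j => wt ω (cutFacets bricksOf (c j)) = maxCutWt ω bricksOf c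
    simp only [coe_product, coe_image, coe_univ, Set.image_univ, Set.mem_prod, Set.mem_range,
      mem_coe, mem_range, card_range] at this ⊢
    exact ⟨⟨_, hj⟩, by rw [maxCutLevels]; omega⟩
  obtain ⟨c₀, hc₀⟩ := exists_isSweepout (Brick := Brick)
  obtain ⟨c, hc, hmin⟩ := Set.Finite.exists_minimalFor' (sweepKey ω bricksOf)
    {c | IsSweepout c} (hfin.subset (Set.image_subset_range _ _)) ⟨c₀, hc₀⟩
  exact ⟨c, hc, fun c' hc' => (le_total _ _).elim (fun h => hmin hc' h) id⟩

end SweepKey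

section Exchange

variable {Brick : Type} [DecidableEq Brick] {c : ℕ → Finset Brick} {t : ℕ}
  {A B : Brick}

/-- `c` with `A` postponed to just after level `t` and `B` brought forward to level `t`. -/
def exchange (c : ℕ → Finset Brick) (t : ℕ) (A B : Brick) (j : ℕ) : Finset Brick :=
  if j < t then (if A ∈ c j then (c (j + 1)).erase A else c j)
  else if j = t then insert B ((c t).erase A)
  else if B ∈ c j then c j else insert B (c (j - 1))

lemma exchange_of_lt {j : ℕ} (hj : j < t) :
    exchange c t A B j = if A ∈ c j then (c (j + 1)).erase A else c j := by
  simp [exchange, hj]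

lemma exchange_self : exchange c t A B t = insert B ((c t).erase A) := by
  simp [exchange]

lemma exchange_of_gt {j : ℕ} (hj : t < j) :
    exchange c t A B j = if B ∈ c j then c j else insert B (c (j - 1)) := by
  simp [exchange, hj.ne', hj.not_gt]

lemma IsSweepout.monotone_exchange [Fintype Brick] (hc : IsSweepout c) :
    Monotone (exchange c t A B) := by
  refine monotone_nat_of_le_succ fun j => ?_
  rcases lt_trichotomy (j + 1) t with hj | hj | hj
  · rw [exchange_of_lt hj, exchange_of_lt (by omega : j < t)]
    split_ifs with hAj hAj'
    · exact erase_subset_erase A (hc.mono (by omega))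
    · exact absurd (hc.mono j.le_succ hAj) hAj'
    · exact subset_erase.2 ⟨hc.mono (by omega), hAj⟩
    · exact hc.mono j.le_succ
  · subst hj
    rw [exchange_of_lt (Nat.lt_add_one j), exchange_self]
    split_ifs with hAj
    · exact subset_insert _ _
    · exact (subset_erase.2 ⟨hc.mono j.le_succ, hAj⟩).trans (subset_insert _ _)
  · rcases (Nat.lt_succ_iff.1 hj).eq_or_lt with rfl | hj
    · rw [exchange_self, exchange_of_gt (Nat.lt_add_one t)]
      split_ifs with hBt
      · exact insert_subset hBt ((erase_subset _ _).trans (hc.mono t.le_succ))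
      · exact insert_subset_insert _ (erase_subset _ _)
    · rw [exchange_of_gt hj, exchange_of_gt (by omega : t < j + 1)]
      split_ifs with hBj hBj' hBj'
      · exact hc.mono j.le_succ
      · exact absurd (hc.mono j.le_succ hBj) hBj'
      · exact insert_subset hBj' (hc.mono (by omega))
      · exact insert_subset_insert _ (hc.mono (by omega))

lemma IsSweepout.card_exchange [Fintype Brick] (hc : IsSweepout c) (hA : A ∈ c t) (hB : B ∉ c t)
    (j : ℕ) : #(exchange c t A B j) = min j (Fintype.card Brick) := by
  have ht0 := hc.pos_of_mem hA
  have htN := hc.lt_of_notMem hB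
  rcases lt_trichotomy j t with hj | rfl | hj
  · rw [exchange_of_lt hj]
    split_ifs with hAj
    · rw [card_erase_of_mem (hc.mono j.le_succ hAj), hc.card_eq]
      omega
    · exact hc.card_eq j
  · rw [exchange_self, card_insert_of_notMem fun h => hB (mem_of_mem_erase h),
      card_erase_of_mem hA, hc.card_eq]
    omega
  · rw [exchange_of_gt hj]
    split_ifs with hBj
    · exact hc.card_eq j
    · have hjN := hc.lt_of_notMem hBj
      rw [card_insert_of_notMem fun h => hBj (hc.mono (Nat.sub_le j 1) h), hc.card_eq]
      omega

lemma IsSweepout.exchange [Fintype Brick] (hc : IsSweepout c) (hA : A ∈ c t) (hB : B ∉ c t) :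
    IsSweepout (exchange c t A B) :=
  ⟨hc.monotone_exchange, hc.card_exchange hA hB⟩

end Exchange

section MinimalSweepout

variable {Brick Facet : Type} [Fintype Brick] [DecidableEq Brick] [Fintype Facet]
  [DecidableEq Facet] {ω : Facet → ℝ} {bricksOf : Facet → Finset Brick} {c : ℕ → Finset Brick}
  {t : ℕ} {A B : Brick}

/-- Otherwise `exchange c t A B` has a smaller key: level `t` drops below the maximum, and so does
every other level that changes, since a brick of non-negative strength is only admitted when it
enters at level `t` (resp. `t + 1`), and then the levels below (resp. above) `t` do not change. -/
theorem neg_strength_sub_strength_le_two_mul_wt_commonFacets (hω : ∀ f, 0 ≤ ω f)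
    (hbricksOf : ∀ f, #(bricksOf f) ≤ 2) (hc : IsSweepout c)
    (hmin : ∀ c', IsSweepout c' → sweepKey ω bricksOf c ≤ sweepKey ω bricksOf c')
    (ht : wt ω (cutFacets bricksOf (c t)) = maxCutWt ω bricksOf c) (hA : A ∈ c t) (hB : B ∉ c t)
    (hA' : strength ω (intFacets bricksOf A) (cutFacets bricksOf (c t)) < 0 ∨ A ∉ c (t - 1))
    (hB' : strength ω (intFacets bricksOf B) (cutFacets bricksOf (c t)) < 0 ∨ B ∈ c (t + 1)) :
    -strength ω (intFacets bricksOf A) (cutFacets bricksOf (c t)) -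
        strength ω (intFacets bricksOf B) (cutFacets bricksOf (c t)) ≤
      2 * wt ω (commonFacets bricksOf A B) := by
  by_contra! hcost
  set m := maxCutWt ω bricksOf c
  have htN := hc.lt_of_notMem hB
  have hlevel : ∀ j ≤ Fintype.card Brick, wt ω (cutFacets bricksOf (c j)) ≤ m :=
    fun j hj => wt_cutFacets_le_maxCutWt hj
  have hlower : ∀ j, (j ≠ t ∧ exchange c t A B j = c j) ∨
      wt ω (cutFacets bricksOf (exchange c t A B j)) < m := by
    intro j
    rcases lt_trichotomy j t with hj | rfl | hj
    · rw [exchange_of_lt hj]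
      by_cases hAj : A ∈ c j
      · have hσA := hA'.resolve_right fun h => h (hc.mono (by omega) hAj)
        have hAj' := hc.mono j.le_succ hAj
        rw [if_pos hAj, wt_cutFacets_erase hbricksOf hAj']
        right
        linarith [hlevel (j + 1) (by omega), strength_cutFacets_mono (ω := ω)
          (bricksOf := bricksOf) hω hAj' (hc.mono hj)]
      · exact .inl ⟨hj.ne, if_neg hAj⟩
    · rw [exchange_self, wt_cutFacets_insert_erase hbricksOf hA hB]
      right; linarith
    · rw [exchange_of_gt hj]
      by_cases hBj : B ∈ c j
      · exact .inl ⟨hj.ne', if_pos hBj⟩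
      · have hσB := hB'.resolve_right fun h => hBj (hc.mono hj h)
        have hBj' : B ∉ c (j - 1) := fun h => hBj (hc.mono (Nat.sub_le j 1) h)
        rw [if_neg hBj, wt_cutFacets_insert hbricksOf hBj']
        have hjN := hc.lt_of_notMem hBj
        right
        linarith [hlevel (j - 1) (by omega), strength_cutFacets_anti (ω := ω)
          (bricksOf := bricksOf) hω hBj' (hc.mono (by omega : t ≤ j - 1))]
  refine (sweepKey_lt_sweepKey (fun j hj => ?_) ?_).not_ge (hmin _ (hc.exchange hA hB))
  · rcases hlower j with ⟨-, heq⟩ | hlt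
    · exact heq ▸ hlevel j hj
    · exact hlt.le
  · refine (ssubset_iff_of_subset fun j hj => ?_).2 ⟨t, ?_, fun htm => ?_⟩
    · simp only [mem_filter, maxCutLevels] at hj ⊢
      rcases hlower j with ⟨-, heq⟩ | hlt
      · exact ⟨hj.1, heq ▸ hj.2⟩
      · exact absurd hj.2 hlt.ne
    · exact mem_filter.2 ⟨mem_range.2 (by omega), ht⟩
    · rcases hlower t with ⟨hne, -⟩ | hlt
      · exact hne rfl
      · exact hlt.ne (mem_filter.1 htm).2

lemma exists_mem_notMem_pred_strength_nonpos (hbricksOf : ∀ f, #(bricksOf f) ≤ 2)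
    (hc : IsSweepout c) (ht : wt ω (cutFacets bricksOf (c t)) = maxCutWt ω bricksOf c)
    (ht0 : 0 < t) (htN : t ≤ Fintype.card Brick) :
    ∃ A ∈ c t, A ∉ c (t - 1) ∧
      strength ω (intFacets bricksOf A) (cutFacets bricksOf (c t)) ≤ 0 := by
  obtain ⟨A, hA, hins⟩ := hc.exists_insert (j := t - 1) (by omega)
  rw [Nat.sub_add_cancel ht0] at hins
  have hAt : A ∈ c t := hins ▸ mem_insert_self A _
  refine ⟨A, hAt, hA, ?_⟩
  have hlevel := wt_cutFacets_le_maxCutWt (ω := ω) (bricksOf := bricksOf) (c := c)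
    (Nat.sub_le t 1 |>.trans htN)
  rw [show c (t - 1) = (c t).erase A by rw [hins, erase_insert hA],
    wt_cutFacets_erase hbricksOf hAt] at hlevel
  linarith

lemma exists_notMem_mem_succ_strength_nonpos (hbricksOf : ∀ f, #(bricksOf f) ≤ 2)
    (hc : IsSweepout c) (ht : wt ω (cutFacets bricksOf (c t)) = maxCutWt ω bricksOf c)
    (htN : t < Fintype.card Brick) :
    ∃ B ∉ c t, B ∈ c (t + 1) ∧
      strength ω (intFacets bricksOf B) (cutFacets bricksOf (c t)) ≤ 0 := by
  obtain ⟨B, hB, hins⟩ := hc.exists_insert htN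
  refine ⟨B, hB, hins ▸ mem_insert_self B _, ?_⟩
  have hlevel := wt_cutFacets_le_maxCutWt (ω := ω) (bricksOf := bricksOf) (c := c) htN
  rw [hins, wt_cutFacets_insert hbricksOf hB] at hlevel
  linarith

end MinimalSweepout

section MinimalSurface

variable {Brick Facet : Type} [Fintype Brick] [DecidableEq Brick] [Fintype Facet]
  [DecidableEq Facet] {ω : Facet → ℝ} {bricksOf : Facet → Finset Brick} {X : Finset Brick}
  {A B : Brick}

theorem stableMin_or_unstableMin_cutFacets (hbricksOf : ∀ f, #(bricksOf f) ≤ 2)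
    {A₀ B₀ : Brick} (hA₀ : A₀ ∈ X) (hB₀ : B₀ ∉ X)
    (hσA₀ : strength ω (intFacets bricksOf A₀) (cutFacets bricksOf X) ≤ 0)
    (hσB₀ : strength ω (intFacets bricksOf B₀) (cutFacets bricksOf X) ≤ 0)
    (hbal : ∀ A ∈ X, ∀ B ∉ X,
      (strength ω (intFacets bricksOf A) (cutFacets bricksOf X) < 0 ∨ A = A₀) →
      (strength ω (intFacets bricksOf B) (cutFacets bricksOf X) < 0 ∨ B = B₀) →
      -strength ω (intFacets bricksOf A) (cutFacets bricksOf X) -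
          strength ω (intFacets bricksOf B) (cutFacets bricksOf X) ≤
        2 * wt ω (commonFacets bricksOf A B)) :
    StableMin ω bricksOf (cutFacets bricksOf X) ∨
      UnstableMin ω bricksOf (cutFacets bricksOf X) := by
  set S := cutFacets bricksOf X
  have habs : ∀ A ∈ X, ∀ B ∉ X,
      (strength ω (intFacets bricksOf A) S < 0 ∨ A = A₀) →
      (strength ω (intFacets bricksOf B) S < 0 ∨ B = B₀) →
      2 * wt ω (commonFacets bricksOf A B) ≥
        |strength ω (intFacets bricksOf A) S| + |strength ω (intFacets bricksOf B) S| := by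
    intro A hA B hB hσA hσB
    rw [abs_of_nonpos (hσA.elim le_of_lt fun h => h ▸ hσA₀),
      abs_of_nonpos (hσB.elim le_of_lt fun h => h ▸ hσB₀)]
    exact hbal A hA B hB hσA hσB
  have hpartner_B₀ : ∀ A ∈ X, StrictShort ω (intFacets bricksOf A) S →
      ShortMove ω (intFacets bricksOf B₀) S ∧ 2 * wt ω (commonFacets bricksOf A B₀) ≥
        |strength ω (intFacets bricksOf A) S| + |strength ω (intFacets bricksOf B₀) S| := by
    intro A hA hAs
    have h := habs A hA B₀ hB₀ (.inl hAs.2) (.inr rfl)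
    have hpos : 0 < wt ω (commonFacets bricksOf A B₀) := by
      linarith [abs_pos.2 hAs.2.ne, abs_nonneg (strength ω (intFacets bricksOf B₀) S)]
    exact ⟨⟨(inter_cutFacets_nonempty_of_wt_commonFacets_pos hbricksOf hA hB₀ hpos).2, hσB₀⟩, h⟩
  have hpartner_A₀ : ∀ B ∉ X, StrictShort ω (intFacets bricksOf B) S →
      ShortMove ω (intFacets bricksOf A₀) S ∧ 2 * wt ω (commonFacets bricksOf A₀ B) ≥
        |strength ω (intFacets bricksOf A₀) S| + |strength ω (intFacets bricksOf B) S| := by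
    intro B hB hBs
    have h := habs A₀ hA₀ B hB (.inr rfl) (.inl hBs.2)
    have hpos : 0 < wt ω (commonFacets bricksOf A₀ B) := by
      linarith [abs_pos.2 hBs.2.ne, abs_nonneg (strength ω (intFacets bricksOf A₀) S)]
    exact ⟨⟨(inter_cutFacets_nonempty_of_wt_commonFacets_pos hbricksOf hA₀ hB hpos).1, hσA₀⟩, h⟩
  refine or_iff_not_imp_left.2 fun hunstable => ?_
  obtain ⟨D, hD⟩ : ∃ D, StrictShort ω (intFacets bricksOf D) S := by
    simpa [StableMin] using hunstable
  refine ⟨X, Xᶜ, ⟨A₀, hA₀⟩, ⟨B₀, mem_compl.2 hB₀⟩, inter_compl X, union_compl X,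
    fun A hA B hB => commonFacets_subset_cutFacets hA (mem_compl.1 hB), ?_, ?_, ?_,
    fun A hA hAs => ⟨B₀, mem_compl.2 hB₀, hpartner_B₀ A hA hAs⟩,
    fun B hB hBs => ⟨A₀, hA₀, hpartner_A₀ B (mem_compl.1 hB) hBs⟩,
    fun A hA B hB hAs hBs => habs A hA B (mem_compl.1 hB) (.inl hAs.2) (.inl hBs.2)⟩
  · by_cases hDX : D ∈ X
    · exact ⟨D, hDX, hD.1, hD.2.le⟩
    · exact ⟨A₀, hA₀, (hpartner_A₀ D hDX hD).1⟩
  · by_cases hDX : D ∈ X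
    · exact ⟨B₀, mem_compl.2 hB₀, (hpartner_B₀ D hDX hD).1⟩
    · exact ⟨D, mem_compl.2 hDX, hD.1, hD.2.le⟩
  · by_cases hDX : D ∈ X
    · exact .inl ⟨D, hDX, hD⟩
    · exact .inr ⟨D, mem_compl.2 hDX, hD⟩

end MinimalSurface

/-- a weighted brick complex with an interior facet of positive weight
contains a (nonempty) proper surface which is a stable or an unstable minimal surface. -/
theorem stmt13 {Brick Facet Face : Type} [Fintype Brick] [DecidableEq Brick]
    [Fintype Facet] [DecidableEq Facet] [DecidableEq Face]
    (ω : Facet → ℝ) (hω : ∀ f, 0 ≤ ω f)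
    (bricksOf : Facet → Finset Brick)
    (hBC : ∀ f, (bricksOf f).card = 1 ∨ (bricksOf f).card = 2)
    (facesOf : Facet → Finset Face) (bdE : Finset Face)
    (hbrickproper : ∀ A : Brick,
      ProperSurf (univ.filter (fun f => (bricksOf f).card = 1)) facesOf bdE
        (intFacets bricksOf A))
    (hpos : ∃ f : Facet, (bricksOf f).card = 2 ∧ 0 < ω f) :
    ∃ S : Finset Facet, S.Nonempty ∧
      ProperSurf (univ.filter (fun f => (bricksOf f).card = 1)) facesOf bdE S ∧
      (StableMin ω bricksOf S ∨ UnstableMin ω bricksOf S) := by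
  have hbricksOf : ∀ f, #(bricksOf f) ≤ 2 := fun f => by rcases hBC f with h | h <;> omega
  obtain ⟨c, hc, hmin⟩ := exists_isSweepout_forall_sweepKey_le ω bricksOf
  obtain ⟨t, htN, ht⟩ := exists_wt_cutFacets_eq_maxCutWt (ω := ω) (bricksOf := bricksOf) (c := c)
  have hS : (cutFacets bricksOf (c t)).Nonempty :=
    nonempty_of_sum_ne_zero (ht ▸ maxCutWt_pos hω hc hpos).ne'
  obtain ⟨-, ⟨A, -, hA⟩, B, -, hB⟩ := hS.exists_mem.imp fun _ => mem_cutFacets.1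
  obtain ⟨A₀, hA₀, hA₀', hσA₀⟩ :=
    exists_mem_notMem_pred_strength_nonpos hbricksOf hc ht (hc.pos_of_mem hA) htN
  obtain ⟨B₀, hB₀, hB₀', hσB₀⟩ :=
    exists_notMem_mem_succ_strength_nonpos hbricksOf hc ht (hc.lt_of_notMem hB)
  refine ⟨_, hS, properSurf_cutFacets hbricksOf hbrickproper _,
    stableMin_or_unstableMin_cutFacets hbricksOf hA₀ hB₀ hσA₀ hσB₀ fun A hA B hB hA' hB' => ?_⟩
  exact neg_strength_sub_strength_le_two_mul_wt_commonFacets hω hbricksOf hc hmin ht hA hB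
    (hA'.imp_right fun h : A = A₀ => h ▸ hA₀') (hB'.imp_right fun h : B = B₀ => h ▸ hB₀')
end

section
/- Let M be an n-dimensional simplicial pseudomanifold (n ≥ 2) with all facet weights 1, let P be the boundary of an n-simplex inside M (so ω(P) = n+1), and let S be a level surface of an ordering containing a facet F lying on one side X of P with F not in P. If F shares no (n−2)-face with P, then S contains at least n+1 facets in X not in P; if F shares exactly one (n−2)-face with P, S contains at least n facets in X not in P. -/
open Finset

/-- The facets ((n−1)-dimensional faces) of an n-simplex `s`, as its n-element subsets. -/
def simFacets {V : Type} [DecidableEq V] (n : ℕ) (s : Finset V) : Finset (Finset V) :=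
  s.powersetCard n

/-- An n-dimensional (closed) pseudomanifold: a nonempty finite pure n-dimensional
simplicial complex, given by its set `K` of n-simplices (each an (n+1)-element vertex
set), in which every (n−1)-face lies in exactly two n-simplices and the dual graph is
connected. -/
def IsPseudomanifold {V : Type} [DecidableEq V] (n : ℕ) (K : Finset (Finset V)) : Prop :=
  K.Nonempty ∧
  (∀ s ∈ K, s.card = n + 1) ∧
  (∀ f : Finset V, f.card = n → (∃ s ∈ K, f ⊆ s) → (K.filter (fun s => f ⊆ s)).card = 2) ∧
  (∀ s ∈ K, ∀ t ∈ K,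
    Relation.ReflTransGen (fun a b => a ∈ K ∧ b ∈ K ∧ a ≠ b ∧ (a ∩ b).card = n) s t)

/-- The sublevel set of an ordering `O` of the n-simplices of `K` at height `j`:
the simplices at heights 1,…,j. -/
def psub {V : Type} [DecidableEq V] (K : Finset (Finset V)) {N : ℕ}
    (O : Fin N ≃ {s : Finset V // s ∈ K}) (j : ℕ) : Finset (Finset V) :=
  ((Finset.univ : Finset (Fin N)).filter (fun k : Fin N => k.val + 1 ≤ j)).image
    (fun k => (O k).val)

/-- The level surface at height `j`: the (n−1)-faces shared between a simplex of the
sublevel set and one of its complement. -/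
def plevel {V : Type} [DecidableEq V] [Fintype V] (n : ℕ) (K : Finset (Finset V)) {N : ℕ}
    (O : Fin N ≃ {s : Finset V // s ∈ K}) (j : ℕ) : Finset (Finset V) :=
  (Finset.univ : Finset (Finset V)).filter
    (fun f => f.card = n ∧ (∃ s ∈ psub K O j, f ⊆ s) ∧ ∃ s ∈ K, s ∉ psub K O j ∧ f ⊆ s)

/-- Λ(j) for unit facet weights: the number of facets in the level surface at height j. -/
def pLam {V : Type} [DecidableEq V] [Fintype V] (n : ℕ) (K : Finset (Finset V)) {N : ℕ}
    (O : Fin N ≃ {s : Finset V // s ∈ K}) (j : ℕ) : ℕ :=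
  (plevel n K O j).card

/-!
Every (n−2)-face `e` of `F` that lies in no facet of `P` is, by a parity count, shared by `F`
with a second facet `g` of the level surface; `g` is not in `P` (it contains `e`) and lies on
the side `X` (otherwise `e` would be a face common to `X` and its complement, hence in `P`).
Two facets meet in at most one (n−2)-face, namely `F ∩ g`, so these companions are distinct
and, together with `F`, give `#E + 1` facets of the required kind, where `E` is the set of
such faces `e`. Of the `n` (n−2)-faces of `F`, none resp. at most one lies in `P`.
-/

section Faces

variable {V : Type} [DecidableEq V]

lemma card_filter_superset_powersetCard_succ {e s : Finset V} (hes : e ⊆ s) :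
    #{f ∈ s.powersetCard (#e + 1) | e ⊆ f} = #(s \ e) := by
  have himage : {f ∈ s.powersetCard (#e + 1) | e ⊆ f} = (s \ e).image (insert · e) := by
    ext f
    simp only [mem_filter, mem_powersetCard, mem_image, mem_sdiff]
    constructor
    · rintro ⟨⟨hfs, hcard⟩, hef⟩
      obtain ⟨v, hve, rfl⟩ := exists_eq_insert_iff.mpr ⟨hef, hcard.symm⟩
      exact ⟨v, ⟨hfs (mem_insert_self v e), hve⟩, rfl⟩
    · rintro ⟨v, ⟨hvs, hve⟩, rfl⟩
      exact ⟨⟨insert_subset hvs hes, card_insert_of_notMem hve⟩, subset_insert v e⟩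
  rw [himage, card_image_of_injOn]
  intro a ha b _ hab
  exact (insert_inj (mem_sdiff.mp (mem_coe.mp ha)).2).mp hab

lemma eq_inter_of_subset_of_ne {e F g : Finset V} (heF : e ⊆ F) (heg : e ⊆ g) (hgF : g ≠ F)
    (hcard : #g = #F) (he : #e + 1 = #F) : e = F ∩ g := by
  have hlt : #(F ∩ g) < #F := by
    refine card_lt_card (Finset.ssubset_iff_subset_ne.mpr ⟨inter_subset_left, fun h => hgF ?_⟩)
    exact (eq_of_subset_of_card_le (inter_eq_left.mp h) hcard.le).symm
  exact eq_of_subset_of_card_le (subset_inter heF heg) (by omega)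

lemma card_add_one_le_of_forall_exists_ne_superset {F : Finset V} {E G : Finset (Finset V)}
    (hFG : F ∈ G) (hG : ∀ g ∈ G, #g = #F)
    (hE : ∀ e ∈ E, e ⊆ F ∧ #e + 1 = #F ∧ ∃ g ∈ G, g ≠ F ∧ e ⊆ g) : #E + 1 ≤ #G := by
  have hEimage : E ⊆ (G.erase F).image (F ∩ ·) := by
    intro e he
    obtain ⟨heF, hecard, g, hgG, hgF, heg⟩ := hE e he
    exact mem_image.mpr ⟨g, mem_erase.mpr ⟨hgF, hgG⟩,
      (eq_inter_of_subset_of_ne heF heg hgF (hG g hgG) hecard).symm⟩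
  have hle := (card_le_card hEimage).trans card_image_le
  rw [card_erase_of_mem hFG] at hle
  have hpos : 0 < #G := card_pos.mpr ⟨F, hFG⟩
  omega

end Faces

section LevelSurface

variable {V : Type} [DecidableEq V] {N : ℕ}

lemma psub_subset (K : Finset (Finset V)) (O : Fin N ≃ {s : Finset V // s ∈ K}) (j : ℕ) :
    psub K O j ⊆ K := by
  intro s hs
  obtain ⟨k, -, rfl⟩ := mem_image.mp hs
  exact (O k).2

variable [Fintype V] {n : ℕ} {K : Finset (Finset V)}

/-- Each (n−1)-face lies in exactly two n-simplices, so it separates the sublevel set from its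
complement iff it lies in exactly one simplex of the sublevel set. -/
lemma mem_plevel_iff_odd (hK : IsPseudomanifold n K) (O : Fin N ≃ {s : Finset V // s ∈ K})
    (j : ℕ) {f : Finset V} (hf : #f = n) :
    f ∈ plevel n K O j ↔ Odd #{s ∈ psub K O j | f ⊆ s} := by
  have hsub : {s ∈ psub K O j | f ⊆ s} ⊆ {s ∈ K | f ⊆ s} :=
    filter_subset_filter _ (psub_subset K O j)
  simp only [plevel, mem_filter, mem_univ, true_and, hf]
  constructor
  · rintro ⟨⟨s, hs, hfs⟩, t, htK, ht, hft⟩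
    have htwo := hK.2.2.1 f hf ⟨t, htK, hft⟩
    have hpos : 0 < #{s ∈ psub K O j | f ⊆ s} := card_pos.mpr ⟨s, mem_filter.mpr ⟨hs, hfs⟩⟩
    have hlt : #{s ∈ psub K O j | f ⊆ s} < 2 := htwo ▸ card_lt_card
      ((ssubset_iff_of_subset hsub).mpr
        ⟨t, mem_filter.mpr ⟨htK, hft⟩, fun h => ht (mem_filter.mp h).1⟩)
    rw [show #{s ∈ psub K O j | f ⊆ s} = 1 by omega]
    exact odd_one
  · intro hodd
    obtain ⟨s, hs⟩ := card_pos.mp hodd.pos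
    obtain ⟨hsub_s, hfs⟩ := mem_filter.mp hs
    have htwo := hK.2.2.1 f hf ⟨s, psub_subset K O j hsub_s, hfs⟩
    have hne : {s ∈ psub K O j | f ⊆ s} ≠ {s ∈ K | f ⊆ s} := by
      intro h
      rw [h, htwo] at hodd
      exact Nat.not_odd_iff_even.mpr even_two hodd
    obtain ⟨t, ht, htA⟩ := exists_of_ssubset (ssubset_of_subset_of_ne hsub hne)
    obtain ⟨htK, hft⟩ := mem_filter.mp ht
    exact ⟨⟨s, hsub_s, hfs⟩, t, htK, fun h => htA (mem_filter.mpr ⟨h, hft⟩), hft⟩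

/-- Double counting the incidences between the (n−1)-faces through `e` and the simplices of
the sublevel set through `e`, each of which has exactly two (n−1)-faces through `e`. -/
lemma even_card_filter_plevel_superset (hK : IsPseudomanifold n K)
    (O : Fin N ≃ {s : Finset V // s ∈ K}) (j : ℕ) {e : Finset V} (he : #e + 1 = n) :
    Even #{f ∈ plevel n K O j | e ⊆ f} := by
  set U := {f ∈ (univ : Finset V).powersetCard n | e ⊆ f}
  have hlevel : {f ∈ plevel n K O j | e ⊆ f} = {f ∈ U | Odd #{s ∈ psub K O j | f ⊆ s}} := by
    ext f
    simp only [U, mem_filter, mem_powersetCard, subset_univ, true_and]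
    constructor
    · rintro ⟨hf, hef⟩
      have hfc : #f = n := (mem_filter.mp hf).2.1
      exact ⟨⟨hfc, hef⟩, (mem_plevel_iff_odd hK O j hfc).mp hf⟩
    · rintro ⟨⟨hfc, hef⟩, hodd⟩
      exact ⟨(mem_plevel_iff_odd hK O j hfc).mpr hodd, hef⟩
  have hdouble : ∑ f ∈ U, #{s ∈ psub K O j | f ⊆ s} = ∑ s ∈ psub K O j, #{f ∈ U | f ⊆ s} := by
    simp only [card_filter]
    exact sum_comm
  rw [hlevel, ← even_sum_iff_even_card_odd, hdouble]
  refine even_sum _ fun s hs => ?_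
  by_cases hes : e ⊆ s
  · have hfaces : {f ∈ U | f ⊆ s} = {f ∈ s.powersetCard (#e + 1) | e ⊆ f} := by
      ext f
      simp only [U, he, mem_filter, mem_powersetCard, subset_univ, true_and]
      tauto
    rw [hfaces, card_filter_superset_powersetCard_succ hes, card_sdiff_of_subset hes,
      hK.2.1 s (psub_subset K O j hs)]
    exact ⟨1, by omega⟩
  · have hempty : {f ∈ U | f ⊆ s} = ∅ :=
      filter_eq_empty_iff.mpr fun f hf hfs => hes ((mem_filter.mp hf).2.trans hfs)
    rw [hempty, card_empty]
    exact Even.zero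

lemma exists_ne_mem_plevel_superset (hK : IsPseudomanifold n K)
    (O : Fin N ≃ {s : Finset V // s ∈ K}) (j : ℕ) {e F : Finset V} (he : #e + 1 = n)
    (hF : F ∈ plevel n K O j) (heF : e ⊆ F) :
    ∃ g ∈ plevel n K O j, g ≠ F ∧ e ⊆ g := by
  obtain ⟨k, hk⟩ := even_card_filter_plevel_superset hK O j he
  have hpos : 0 < #{f ∈ plevel n K O j | e ⊆ f} := card_pos.mpr ⟨F, mem_filter.mpr ⟨hF, heF⟩⟩
  obtain ⟨g, hg, hgF⟩ := exists_mem_ne (by omega : 1 < #{f ∈ plevel n K O j | e ⊆ f}) F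
  exact ⟨g, (mem_filter.mp hg).1, hgF, (mem_filter.mp hg).2⟩

lemma exists_ne_mem_plevel_side_superset (hK : IsPseudomanifold n K)
    (O : Fin N ≃ {s : Finset V // s ∈ K}) (j : ℕ) {P X : Finset (Finset V)}
    (hside : ∀ s ∈ X, ∀ t ∈ K, t ∉ X → ∀ e : Finset V, e ⊆ s → e ⊆ t → ∃ p ∈ P, e ⊆ p)
    {e F : Finset V} (he : #e + 1 = n) (hF : F ∈ plevel n K O j) (hFX : ∃ s ∈ X, F ⊆ s)
    (heF : e ⊆ F) (heP : ¬ ∃ p ∈ P, e ⊆ p) :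
    ∃ g ∈ {f ∈ plevel n K O j | f ∉ P ∧ ∃ s ∈ X, f ⊆ s}, g ≠ F ∧ e ⊆ g := by
  obtain ⟨g, hg, hgF, heg⟩ := exists_ne_mem_plevel_superset hK O j he hF heF
  refine ⟨g, mem_filter.mpr ⟨hg, fun hgP => heP ⟨g, hgP, heg⟩, ?_⟩, hgF, heg⟩
  obtain ⟨-, -, ⟨s₁, hs₁, hgs₁⟩, -⟩ := mem_filter.mp hg
  by_cases hs₁X : s₁ ∈ X
  · exact ⟨s₁, hs₁X, hgs₁⟩
  · obtain ⟨s, hsX, hFs⟩ := hFX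
    exact absurd (hside s hsX s₁ (psub_subset K O j hs₁) hs₁X e (heF.trans hFs)
      (heg.trans hgs₁)) heP

end LevelSurface

theorem stmt15_general {V : Type} [DecidableEq V] [Fintype V]
    (n : ℕ) (hn : 2 ≤ n) (K : Finset (Finset V)) (hK : IsPseudomanifold n K)
    (c : Finset V)
    (X : Finset (Finset V))
    (hside : ∀ s ∈ X, ∀ t ∈ K, t ∉ X → ∀ e : Finset V, e ⊆ s → e ⊆ t →
      ∃ p ∈ simFacets n c, e ⊆ p)
    {N : ℕ} (O : Fin N ≃ {s : Finset V // s ∈ K}) (j : ℕ)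
    (S : Finset (Finset V)) (hS : S = plevel n K O j)
    (F : Finset V) (hFS : F ∈ S) (hFX : ∃ s ∈ X, F ⊆ s) (hFP : F ∉ simFacets n c) :
    ((¬ ∃ e : Finset V, e.card = n - 1 ∧ e ⊆ F ∧ ∃ p ∈ simFacets n c, e ⊆ p) →
      n + 1 ≤ (S.filter (fun f => f ∉ simFacets n c ∧ ∃ s ∈ X, f ⊆ s)).card) ∧
    ((∃! e : Finset V, e.card = n - 1 ∧ e ⊆ F ∧ ∃ p ∈ simFacets n c, e ⊆ p) →
      n ≤ (S.filter (fun f => f ∉ simFacets n c ∧ ∃ s ∈ X, f ⊆ s)).card) := by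
  subst hS
  have hFcard : #F = n := (mem_filter.mp hFS).2.1
  set inP := fun e : Finset V => ∃ p ∈ simFacets n c, e ⊆ p
  have hcount : #{e ∈ F.powersetCard (n - 1) | ¬ inP e} + 1 ≤
      #{f ∈ plevel n K O j | f ∉ simFacets n c ∧ ∃ s ∈ X, f ⊆ s} := by
    refine card_add_one_le_of_forall_exists_ne_superset (mem_filter.mpr ⟨hFS, hFP, hFX⟩)
      (fun g hg => hFcard ▸ (mem_filter.mp (mem_filter.mp hg).1).2.1) fun e he => ?_
    obtain ⟨⟨heF, hecard⟩, heP⟩ := mem_filter.mp he |>.imp_left mem_powersetCard.mp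
    have he1 : #e + 1 = n := by omega
    exact ⟨heF, hFcard ▸ he1,
      exists_ne_mem_plevel_side_superset hK O j hside he1 hFS hFX heF heP⟩
  have hsplit : #{e ∈ F.powersetCard (n - 1) | inP e} +
      #{e ∈ F.powersetCard (n - 1) | ¬ inP e} = n := by
    rw [card_filter_add_card_filter_not, card_powersetCard, hFcard,
      Nat.choose_symm_of_eq_add (by omega : n = (n - 1) + 1), Nat.choose_one_right]
  refine ⟨fun hnone => ?_, fun hunique => ?_⟩
  · have hzero : #{e ∈ F.powersetCard (n - 1) | inP e} = 0 :=
      card_eq_zero.mpr <| filter_eq_empty_iff.mpr fun e he heP =>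
        hnone ⟨e, (mem_powersetCard.mp he).2, (mem_powersetCard.mp he).1, heP⟩
    omega
  · have hone : #{e ∈ F.powersetCard (n - 1) | inP e} ≤ 1 :=
      card_le_one.mpr fun a ha b hb => by
        obtain ⟨⟨haF, hacard⟩, haP⟩ := mem_filter.mp ha |>.imp_left mem_powersetCard.mp
        obtain ⟨⟨hbF, hbcard⟩, hbP⟩ := mem_filter.mp hb |>.imp_left mem_powersetCard.mp
        exact hunique.unique ⟨hacard, haF, haP⟩ ⟨hbcard, hbF, hbP⟩
    omega

/-- let P = ∂c be the boundary sphere of an n-simplex `c` inside the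
pseudomanifold `K` (n ≥ 2), let `X` be one side of P (any face common to a simplex of X
and a simplex not in X lies in a facet of P), and let `S` be a level surface of an
ordering containing a facet `F` on the side `X` with `F ∉ P`.  If `F` shares no
(n−2)-face with P then S contains at least n+1 facets in X and not in P; if `F` shares
exactly one (n−2)-face with P, then S contains at least n such facets. -/
theorem stmt15 {V : Type} [DecidableEq V] [Fintype V]
    (n : ℕ) (hn : 2 ≤ n) (K : Finset (Finset V)) (hK : IsPseudomanifold n K)
    (c : Finset V) (hc : c.card = n + 1)
    (hcK : ∀ f ∈ simFacets n c, ∃ s ∈ K, f ⊆ s)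
    (X : Finset (Finset V)) (hX : X ⊆ K)
    (hside : ∀ s ∈ X, ∀ t ∈ K, t ∉ X → ∀ e : Finset V, e ⊆ s → e ⊆ t →
      ∃ p ∈ simFacets n c, e ⊆ p)
    {N : ℕ} (O : Fin N ≃ {s : Finset V // s ∈ K}) (j : ℕ)
    (S : Finset (Finset V)) (hS : S = plevel n K O j)
    (F : Finset V) (hFS : F ∈ S) (hFX : ∃ s ∈ X, F ⊆ s) (hFP : F ∉ simFacets n c) :
    ((¬ ∃ e : Finset V, e.card = n - 1 ∧ e ⊆ F ∧ ∃ p ∈ simFacets n c, e ⊆ p) →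
      n + 1 ≤ (S.filter (fun f => f ∉ simFacets n c ∧ ∃ s ∈ X, f ⊆ s)).card) ∧
    ((∃! e : Finset V, e.card = n - 1 ∧ e ⊆ F ∧ ∃ p ∈ simFacets n c, e ⊆ p) →
      n ≤ (S.filter (fun f => f ∉ simFacets n c ∧ ∃ s ∈ X, f ⊆ s)).card) :=
  stmt15_general n hn K hK c X hside O j S hS F hFS hFX hFP
end

section
/- Let M be a triangulated compact connected 2-manifold (a simplicial complex) with every edge of weight 1, and let S be a proper embedded separating curve (surface). Then: (a) S is a stable minimal surface if and only if S has topological index 0; (b) S is an unstable minimal surface if and only if S has topological index 1. -/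
/-- The edges of a triangle `T` (a 3-element vertex set): its 2-element subsets. -/
def edgesOfT {V : Type} [DecidableEq V] (T : Finset V) : Finset (Finset V) :=
  T.powersetCard 2

/-- The strength σ(T;S) of a triangle `T` relative to a curve `S`, with unit edge
weights: (#edges of T not in S) − (#edges of T in S). -/
def sigma2 {V : Type} [DecidableEq V] (S : Finset (Finset V)) (T : Finset V) : ℤ :=
  ((edgesOfT T \ S).card : ℤ) - ((edgesOfT T ∩ S).card : ℤ)

/-- `T` is a shortening move for `S`: a triangle of `K` meeting `S` with σ(T;S) ≤ 0.
(In the unit-weight 2-dimensional setting every shortening move is strict.) -/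
def IsShort2 {V : Type} [DecidableEq V] (K S : Finset (Finset V)) (T : Finset V) : Prop :=
  T ∈ K ∧ (edgesOfT T ∩ S).Nonempty ∧ sigma2 S T ≤ 0

/-- `S` is a stable minimal surface: it has no strict shortening moves. -/
def StableMS {V : Type} [DecidableEq V] (K S : Finset (Finset V)) : Prop :=
  ∀ T ∈ K, (edgesOfT T ∩ S).Nonempty → ¬ sigma2 S T < 0

/-- `S` is an unstable minimal surface (Definition 2.8, unit weights): the triangles of
`K` partition into nonempty sets 𝒜, ℬ such that all edges common to triangles on
opposite sides lie in S, each side contains a shortening move (some side a strict one),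
every strict shortening move on one side is balanced by a shortening move on the other
side with 2ω(∂A ⊓ ∂B) ≥ |σ(A;S)| + |σ(B;S)|, and this inequality holds for every pair of
strict shortening moves on opposite sides. -/
def UnstableMS {V : Type} [DecidableEq V] (K S : Finset (Finset V)) : Prop :=
  ∃ 𝒜 ℬ : Finset (Finset V), 𝒜.Nonempty ∧ ℬ.Nonempty ∧ 𝒜 ∩ ℬ = ∅ ∧ 𝒜 ∪ ℬ = K ∧
    (∀ A ∈ 𝒜, ∀ B ∈ ℬ, edgesOfT A ∩ edgesOfT B ⊆ S) ∧
    (∃ A ∈ 𝒜, IsShort2 K S A) ∧ (∃ B ∈ ℬ, IsShort2 K S B) ∧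
    ((∃ A ∈ 𝒜, IsShort2 K S A ∧ sigma2 S A < 0) ∨
     (∃ B ∈ ℬ, IsShort2 K S B ∧ sigma2 S B < 0)) ∧
    (∀ A ∈ 𝒜, IsShort2 K S A → sigma2 S A < 0 →
      ∃ B ∈ ℬ, IsShort2 K S B ∧
        2 * ((edgesOfT A ∩ edgesOfT B).card : ℤ) ≥ |sigma2 S A| + |sigma2 S B|) ∧
    (∀ B ∈ ℬ, IsShort2 K S B → sigma2 S B < 0 →
      ∃ A ∈ 𝒜, IsShort2 K S A ∧
        2 * ((edgesOfT A ∩ edgesOfT B).card : ℤ) ≥ |sigma2 S A| + |sigma2 S B|) ∧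
    (∀ A ∈ 𝒜, ∀ B ∈ ℬ, IsShort2 K S A → sigma2 S A < 0 → IsShort2 K S B →
      sigma2 S B < 0 →
        2 * ((edgesOfT A ∩ edgesOfT B).card : ℤ) ≥ |sigma2 S A| + |sigma2 S B|)

/-- The (1-skeleton of the) disc complex 𝒟 of `S`: vertices are the shortening moves for
`S`, and two of them are adjacent iff they share no edge lying in S.  Since 𝒟 is the
flag complex on this graph, π₀(𝒟) is nontrivial iff this graph is not preconnected. -/
def discGraph {V : Type} [DecidableEq V] (K S : Finset (Finset V)) :
    SimpleGraph {T : Finset V // IsShort2 K S T} where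
  Adj A B := A ≠ B ∧ ∀ e ∈ S, ¬ (e ⊆ A.val ∧ e ⊆ B.val)
  symm := by
    constructor
    rintro A B ⟨h1, h2⟩
    exact ⟨h1.symm, fun e he hc => h2 e he ⟨hc.2, hc.1⟩⟩
  loopless := by constructor; rintro A ⟨h1, -⟩; exact h1 rfl


/-!
Since σ(T;S) = 3 − 2k for a triangle with k edges in S, a shortening move has k ≥ 2 and is
strict, which gives (a). For (b), a common edge of triangles on the same side of S is not in S,
so any two shortening moves on the same side are adjacent in 𝒟. Hence 𝒟 is disconnected exactly
when it has moves on both sides and every move on one side shares an S-edge with every move on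
the other. Embeddedness then rules out k = 3 (a vertex would lie in three edges of S), so every
move has |σ| = 1 and the partition by sides satisfies the balance inequality. Conversely, for an
unstable partition the balance inequality forces opposite strict moves to share an edge, which
lies in S, so no edge of 𝒟 crosses the partition.
-/

open Finset

section Triangle

variable {V : Type} [DecidableEq V]

lemma mem_edgesOfT {T e : Finset V} : e ∈ edgesOfT T ↔ e ⊆ T ∧ #e = 2 :=
  mem_powersetCard

lemma card_edgesOfT {T : Finset V} (hT : #T = 3) : #(edgesOfT T) = 3 := by
  simp [edgesOfT, card_powersetCard, hT]

lemma sigma2_eq (S : Finset (Finset V)) {T : Finset V} (hT : #T = 3) :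
    sigma2 S T = 3 - 2 * (#(edgesOfT T ∩ S) : ℤ) := by
  have h := card_sdiff_add_card_inter (edgesOfT T) S
  rw [card_edgesOfT hT] at h
  unfold sigma2
  omega

lemma eq_inter_of_card_eq_add_one {A B e : Finset V} (hA : #A = #e + 1) (hB : #B = #e + 1)
    (hne : A ≠ B) (heA : e ⊆ A) (heB : e ⊆ B) : e = A ∩ B := by
  refine eq_of_subset_of_card_le (subset_inter heA heB) ?_
  by_contra! hlt
  have hA' : A ∩ B = A := eq_of_subset_of_card_le inter_subset_left (by omega)
  have hB' : A ∩ B = B := eq_of_subset_of_card_le inter_subset_right (by omega)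
  exact hne (hA'.symm.trans hB')

lemma card_erase_le_card_filter_edgesOfT {T : Finset V} {v : V} (hv : v ∈ T) :
    #(T.erase v) ≤ #((edgesOfT T).filter (v ∈ ·)) := by
  refine card_le_card_of_injOn (fun a => {v, a}) (fun a ha => ?_) (fun a ha b _ hab => ?_)
  · obtain ⟨hav, haT⟩ := mem_erase.mp ha
    simp [mem_edgesOfT, insert_subset_iff, hv, haT, card_pair hav.symm]
  · have hab : ({v, a} : Finset V) = {v, b} := hab
    have ha' : a ∈ ({v, b} : Finset V) := hab ▸ mem_insert_of_mem (mem_singleton_self a)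
    rcases mem_insert.mp ha' with h | h
    · exact absurd h (mem_erase.mp ha).1
    · exact mem_singleton.mp h

end Triangle

section ShorteningMoves

variable {V : Type} [DecidableEq V] {K S : Finset (Finset V)}

lemma IsShort2.two_le_card (hpure : ∀ T ∈ K, #T = 3) {T : Finset V} (hT : IsShort2 K S T) :
    2 ≤ #(edgesOfT T ∩ S) := by
  have h := hT.2.2
  rw [sigma2_eq S (hpure T hT.1)] at h
  omega

lemma IsShort2.sigma2_neg (hpure : ∀ T ∈ K, #T = 3) {T : Finset V} (hT : IsShort2 K S T) :
    sigma2 S T < 0 := by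
  have h := hT.two_le_card hpure
  rw [sigma2_eq S (hpure T hT.1)]
  omega

theorem stableMS_iff_isEmpty (hpure : ∀ T ∈ K, #T = 3) :
    StableMS K S ↔ IsEmpty {T : Finset V // IsShort2 K S T} := by
  refine ⟨fun hst => ⟨fun ⟨T, hT⟩ => hst T hT.1 hT.2.1 (hT.sigma2_neg hpure)⟩,
    fun h T hTK hTS hneg => h.false ⟨T, hTK, hTS, hneg.le⟩⟩

lemma not_edgesOfT_subset_of_isShort2 (hpure : ∀ T ∈ K, #T = 3)
    (hdeg : ∀ v, #(S.filter (v ∈ ·)) ≤ 2) {T B : Finset V} (hT : T ∈ K)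
    (hB : IsShort2 K S B) (hne : T ≠ B) (hTB : (edgesOfT T ∩ edgesOfT B).Nonempty) :
    ¬ edgesOfT T ⊆ S := by
  intro hTS
  obtain ⟨e, heTB⟩ := hTB
  rw [mem_inter, mem_edgesOfT, mem_edgesOfT] at heTB
  obtain ⟨⟨heT, he⟩, heB, -⟩ := heTB
  have hTc := hpure T hT
  have hBc := hpure B hB.1
  obtain ⟨f, hf, hfe⟩ := exists_mem_ne (hB.two_le_card hpure) e
  obtain ⟨hfB, hf2⟩ := mem_edgesOfT.mp (mem_inter.mp hf).1
  have hfT : f ∉ edgesOfT T := fun hfT => hfe <|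
    (eq_inter_of_card_eq_add_one (by omega) (by omega) hne (mem_edgesOfT.mp hfT).1 hfB).trans
      (eq_inter_of_card_eq_add_one (by omega) (by omega) hne heT heB).symm
  obtain ⟨v, hv⟩ := inter_nonempty_of_card_lt_card_add_card heB hfB (by omega)
  have hvT : v ∈ T := heT (mem_inter.mp hv).1
  -- the two edges of `T` at `v` and the edge `f ⊄ T` are three edges of `S` at `v`
  have hthree : 3 ≤ #(S.filter (v ∈ ·)) :=
    calc 3 = #(T.erase v) + 1 := by rw [card_erase_of_mem hvT, hTc]
      _ ≤ #((edgesOfT T).filter (v ∈ ·)) + 1 :=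
        Nat.add_le_add_right (card_erase_le_card_filter_edgesOfT hvT) 1
      _ = #(insert f ((edgesOfT T).filter (v ∈ ·))) :=
        (card_insert_of_notMem fun h => hfT (mem_filter.mp h).1).symm
      _ ≤ #(S.filter (v ∈ ·)) := by
        refine card_le_card (insert_subset ?_ (filter_subset_filter _ hTS))
        exact mem_filter.mpr ⟨(mem_inter.mp hf).2, (mem_inter.mp hv).2⟩
  have := hdeg v
  omega

lemma abs_sigma2_eq_one (hpure : ∀ T ∈ K, #T = 3) (hdeg : ∀ v, #(S.filter (v ∈ ·)) ≤ 2)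
    {T B : Finset V} (hT : IsShort2 K S T) (hB : IsShort2 K S B) (hne : T ≠ B)
    (hTB : (edgesOfT T ∩ edgesOfT B).Nonempty) : |sigma2 S T| = 1 := by
  have hTc := card_edgesOfT (hpure T hT.1)
  have hle : #(edgesOfT T ∩ S) ≤ 3 := hTc ▸ card_le_card inter_subset_left
  have hne3 : #(edgesOfT T ∩ S) ≠ 3 := fun h3 =>
    not_edgesOfT_subset_of_isShort2 hpure hdeg hT.1 hB hne hTB <|
      inter_eq_left.mp (eq_of_subset_of_card_le inter_subset_left (by omega))
  have h2 := hT.two_le_card hpure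
  rw [sigma2_eq S (hpure T hT.1), show #(edgesOfT T ∩ S) = 2 by omega]
  rfl

theorem nonempty_and_not_preconnected_of_unstableMS (hpure : ∀ T ∈ K, #T = 3) (h : UnstableMS K S) :
    Nonempty {T : Finset V // IsShort2 K S T} ∧ ¬ (discGraph K S).Preconnected := by
  obtain ⟨𝒜, ℬ, -, -, hdisj, hcover, hcommon, ⟨A₀, hA₀, hA₀s⟩, ⟨B₀, hB₀, hB₀s⟩, -, -, -,
    hbal⟩ := h
  refine ⟨⟨⟨A₀, hA₀s⟩⟩, fun hconn => ?_⟩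
  obtain ⟨w⟩ := hconn ⟨A₀, hA₀s⟩ ⟨B₀, hB₀s⟩
  have hB₀A : B₀ ∉ 𝒜 := fun h => disjoint_left.mp (disjoint_iff_inter_eq_empty.mpr hdisj) h hB₀
  obtain ⟨⟨⟨⟨X, hXs⟩, ⟨Y, hYs⟩⟩, hadj⟩, -, hX, hY⟩ :=
    w.exists_boundary_dart {X | X.1 ∈ 𝒜} hA₀ hB₀A
  have hYℬ : Y ∈ ℬ := (mem_union.mp (hcover ▸ hYs.1)).resolve_left hY
  have hXY := hbal X hX Y hYℬ hXs (hXs.sigma2_neg hpure) hYs (hYs.sigma2_neg hpure)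
  obtain ⟨e, he⟩ : (edgesOfT X ∩ edgesOfT Y).Nonempty := by
    have hσX := abs_pos.mpr (hXs.sigma2_neg hpure).ne
    have hσY := abs_pos.mpr (hYs.sigma2_neg hpure).ne
    rw [← card_pos]
    omega
  obtain ⟨heX, heY⟩ := mem_inter.mp he
  exact hadj.2 e (hcommon X hX Y hYℬ he) ⟨(mem_edgesOfT.mp heX).1, (mem_edgesOfT.mp heY).1⟩

end ShorteningMoves

section Sides

variable {V : Type} [DecidableEq V] {K S : Finset (Finset V)} {side : Finset V → Bool}

lemma side_eq_iff_notMem (hpure : ∀ T ∈ K, #T = 3)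
    (hsep : ∀ s ∈ K, ∀ t ∈ K, s ≠ t → (s ∩ t).card = 2 → ((side s = side t) ↔ (s ∩ t) ∉ S))
    {A B e : Finset V} (hA : A ∈ K) (hB : B ∈ K) (hne : A ≠ B)
    (he : e ∈ edgesOfT A ∩ edgesOfT B) : side A = side B ↔ e ∉ S := by
  rw [mem_inter, mem_edgesOfT, mem_edgesOfT] at he
  obtain ⟨⟨heA, he2⟩, heB, -⟩ := he
  obtain rfl := eq_inter_of_card_eq_add_one (by rw [hpure A hA, he2]) (by rw [hpure B hB, he2])
    hne heA heB
  exact hsep A hA B hB hne he2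

lemma edgesOfT_inter_nonempty_of_not_adj (hS : ∀ e ∈ S, #e = 2)
    {X Y : {T : Finset V // IsShort2 K S T}} (hne : X ≠ Y) (hXY : ¬ (discGraph K S).Adj X Y) :
    (edgesOfT X.1 ∩ edgesOfT Y.1).Nonempty := by
  obtain ⟨e, heS, heX, heY⟩ : ∃ e ∈ S, e ⊆ X.1 ∧ e ⊆ Y.1 := by
    by_contra! h
    exact hXY ⟨hne, fun e heS ⟨heX, heY⟩ => h e heS heX heY⟩
  exact ⟨e, mem_inter.mpr ⟨mem_edgesOfT.mpr ⟨heX, hS e heS⟩, mem_edgesOfT.mpr ⟨heY, hS e heS⟩⟩⟩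

lemma discGraph_adj_of_side_eq (hpure : ∀ T ∈ K, #T = 3) (hS : ∀ e ∈ S, #e = 2)
    (hsep : ∀ s ∈ K, ∀ t ∈ K, s ≠ t → (s ∩ t).card = 2 → ((side s = side t) ↔ (s ∩ t) ∉ S))
    {X Y : {T : Finset V // IsShort2 K S T}} (hne : X ≠ Y) (hside : side X.1 = side Y.1) :
    (discGraph K S).Adj X Y :=
  ⟨hne, fun e heS ⟨heX, heY⟩ =>
    (side_eq_iff_notMem hpure hsep X.2.1 Y.2.1 (Subtype.val_injective.ne hne)
      (mem_inter.mpr ⟨mem_edgesOfT.mpr ⟨heX, hS e heS⟩, mem_edgesOfT.mpr ⟨heY, hS e heS⟩⟩)).mp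
      hside heS⟩

theorem unstableMS_of_forall_side_ne (hpure : ∀ T ∈ K, #T = 3)
    (hdeg : ∀ v, #(S.filter (v ∈ ·)) ≤ 2)
    (hsep : ∀ s ∈ K, ∀ t ∈ K, s ≠ t → (s ∩ t).card = 2 → ((side s = side t) ↔ (s ∩ t) ∉ S))
    (b : Bool) {u v : Finset V} (hu : IsShort2 K S u) (hv : IsShort2 K S v) (hub : side u = b)
    (hvb : side v ≠ b)
    (hcross : ∀ X Y, IsShort2 K S X → IsShort2 K S Y → side X = b → side Y ≠ b →
      (edgesOfT X ∩ edgesOfT Y).Nonempty) :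
    UnstableMS K S := by
  have hne : ∀ X Y, side X = b → side Y ≠ b → X ≠ Y := by
    rintro X Y hX hY rfl
    exact hY hX
  have habs : ∀ X, IsShort2 K S X → |sigma2 S X| = 1 := by
    intro X hX
    by_cases hXb : side X = b
    · exact abs_sigma2_eq_one hpure hdeg hX hv (hne X v hXb hvb) (hcross X v hX hv hXb hvb)
    · refine abs_sigma2_eq_one hpure hdeg hX hu (hne u X hub hXb).symm ?_
      rw [inter_comm]
      exact hcross u X hu hX hub hXb
  have hbal : ∀ A B, IsShort2 K S A → IsShort2 K S B → side A = b → side B ≠ b →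
      2 * (#(edgesOfT A ∩ edgesOfT B) : ℤ) ≥ |sigma2 S A| + |sigma2 S B| := by
    intro A B hA hB hAb hBb
    have hpos := card_pos.mpr (hcross A B hA hB hAb hBb)
    rw [habs A hA, habs B hB]
    omega
  have hu𝒜 : u ∈ K.filter (side · = b) := mem_filter.mpr ⟨hu.1, hub⟩
  have hvℬ : v ∈ K.filter (¬ side · = b) := mem_filter.mpr ⟨hv.1, hvb⟩
  refine ⟨K.filter (side · = b), K.filter (¬ side · = b), ⟨u, hu𝒜⟩, ⟨v, hvℬ⟩,
    disjoint_iff_inter_eq_empty.mp (disjoint_filter_filter_not K K _),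
    filter_union_filter_not_eq _ K, ?_, ⟨u, hu𝒜, hu⟩, ⟨v, hvℬ, hv⟩,
    Or.inl ⟨u, hu𝒜, hu, hu.sigma2_neg hpure⟩,
    fun A hA hAs _ => ⟨v, hvℬ, hv, hbal A v hAs hv (mem_filter.mp hA).2 hvb⟩,
    fun B hB hBs _ => ⟨u, hu𝒜, hu, hbal u B hu hBs hub (mem_filter.mp hB).2⟩,
    fun A hA B hB hAs _ hBs _ => hbal A B hAs hBs (mem_filter.mp hA).2 (mem_filter.mp hB).2⟩
  intro A hA B hB e he
  obtain ⟨hAK, hAb⟩ := mem_filter.mp hA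
  obtain ⟨hBK, hBb⟩ := mem_filter.mp hB
  by_contra heS
  exact hBb ((side_eq_iff_notMem hpure hsep hAK hBK (hne A B hAb hBb) he).mpr heS ▸ hAb)

theorem unstableMS_of_not_preconnected (hpure : ∀ T ∈ K, #T = 3) (hS : ∀ e ∈ S, #e = 2)
    (hdeg : ∀ v, #(S.filter (v ∈ ·)) ≤ 2)
    (hsep : ∀ s ∈ K, ∀ t ∈ K, s ≠ t → (s ∩ t).card = 2 → ((side s = side t) ↔ (s ∩ t) ∉ S))
    (h : ¬ (discGraph K S).Preconnected) : UnstableMS K S := by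
  obtain ⟨u, v, huv⟩ : ∃ u v, ¬ (discGraph K S).Reachable u v := by
    simpa [SimpleGraph.Preconnected] using h
  have hreach : ∀ X Y : {T : Finset V // IsShort2 K S T}, side X.1 = side Y.1 →
      (discGraph K S).Reachable X Y := by
    intro X Y hXY
    by_cases hne : X = Y
    · exact hne ▸ SimpleGraph.Reachable.refl X
    · exact (discGraph_adj_of_side_eq hpure hS hsep hne hXY).reachable
  have hvu : side v.1 ≠ side u.1 := fun h => huv (hreach u v h.symm)
  refine unstableMS_of_forall_side_ne hpure hdeg hsep _ u.2 v.2 rfl hvu fun X Y hX hY hXu hYu => ?_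
  have hYv : side Y = side v.1 := (Bool.eq_not_iff.mpr hYu).trans (Bool.eq_not_iff.mpr hvu).symm
  refine edgesOfT_inter_nonempty_of_not_adj (X := ⟨X, hX⟩) (Y := ⟨Y, hY⟩) hS
    (fun h => hYu (Subtype.mk.inj h ▸ hXu)) fun hadj => huv ?_
  exact ((hreach u ⟨X, hX⟩ hXu.symm).trans hadj.reachable).trans (hreach ⟨Y, hY⟩ v hYv)

end Sides

theorem stmt19_general {V : Type} [DecidableEq V]
    (K : Finset (Finset V))
    (hpure : ∀ T ∈ K, T.card = 3)
    (S : Finset (Finset V))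
    (hSsub : ∀ e ∈ S, e.card = 2 ∧ ∃ T ∈ K, e ⊆ T)
    (hembed : ∀ v : V, (S.filter (fun e => v ∈ e)).card = 0 ∨
      (S.filter (fun e => v ∈ e)).card = 2)
    (side : Finset V → Bool)
    (hsep : ∀ s ∈ K, ∀ t ∈ K, s ≠ t → (s ∩ t).card = 2 →
      ((side s = side t) ↔ (s ∩ t) ∉ S)) :
    (StableMS K S ↔ IsEmpty {T : Finset V // IsShort2 K S T}) ∧
    (UnstableMS K S ↔
      (Nonempty {T : Finset V // IsShort2 K S T} ∧ ¬ (discGraph K S).Preconnected)) := by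
  have hS : ∀ e ∈ S, #e = 2 := fun e he => (hSsub e he).1
  have hdeg : ∀ v, #(S.filter (v ∈ ·)) ≤ 2 := fun v => by rcases hembed v with h | h <;> omega
  exact ⟨stableMS_iff_isEmpty hpure, nonempty_and_not_preconnected_of_unstableMS hpure,
    fun ⟨_, h⟩ => unstableMS_of_not_preconnected hpure hS hdeg hsep h⟩

/-- let `K` be a triangulation (simplicial) of a compact connected closed
2-manifold, with unit edge weights (every edge in exactly two triangles, connected dual
graph, connected vertex links), and let `S` be a proper embedded separating curve (each
vertex lies in 0 or 2 edges of S, and there is a 2-coloring `side` of the triangles such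
that adjacent triangles get the same color iff their common edge is not in S).  Then
(a) S is a stable minimal surface iff its topological index is 0 (the disc complex 𝒟 is
empty), and (b) S is an unstable minimal surface iff its topological index is 1 (𝒟 is
nonempty and π₀(𝒟) is nontrivial, i.e. the graph of 𝒟 is not preconnected). -/
theorem stmt19 {V : Type} [DecidableEq V] [Fintype V]
    (K : Finset (Finset V))
    (hpure : ∀ T ∈ K, T.card = 3)
    (hpm : ∀ e : Finset V, e.card = 2 → (∃ T ∈ K, e ⊆ T) →
      (K.filter (fun T => e ⊆ T)).card = 2)
    (hconn : ∀ s ∈ K, ∀ t ∈ K,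
      Relation.ReflTransGen (fun a b => a ∈ K ∧ b ∈ K ∧ a ≠ b ∧ (a ∩ b).card = 2) s t)
    (hmanifold : ∀ v : V, ∀ s ∈ K, v ∈ s → ∀ t ∈ K, v ∈ t →
      Relation.ReflTransGen
        (fun a b => a ∈ K ∧ b ∈ K ∧ v ∈ a ∧ v ∈ b ∧ a ≠ b ∧ (a ∩ b).card = 2) s t)
    (S : Finset (Finset V))
    (hSsub : ∀ e ∈ S, e.card = 2 ∧ ∃ T ∈ K, e ⊆ T)
    (hembed : ∀ v : V, (S.filter (fun e => v ∈ e)).card = 0 ∨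
      (S.filter (fun e => v ∈ e)).card = 2)
    (side : Finset V → Bool)
    (hsep : ∀ s ∈ K, ∀ t ∈ K, s ≠ t → (s ∩ t).card = 2 →
      ((side s = side t) ↔ (s ∩ t) ∉ S)) :
    (StableMS K S ↔ IsEmpty {T : Finset V // IsShort2 K S T}) ∧
    (UnstableMS K S ↔
      (Nonempty {T : Finset V // IsShort2 K S T} ∧ ¬ (discGraph K S).Preconnected)) :=
  stmt19_general K hpure S hSsub hembed side hsep
end
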